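/- arXiv:2403.09122 — 8 statements merged into one kernel-verified Lean document; each statement's English description precedes it below -/
import Mathlib

section
/- Let G be a finite simple graph and M a set of vertices of G. Then M is a monitoring edge-geodetic set of G if and only if for every assignment f that assigns to each pair of distinct vertices u,v of M some shortest u-v path in G, the set M together with f is a strong edge-geodetic set (i.e., every edge of G lies on f(u,v) for some pair of distinct vertices u,v of M). -/
open SimpleGraph

/-- A pair of vertices `u`, `v` monitors an edge `e` if `u` and `v` are reachable from
each other and `e` belongs to every shortest path (walk of length `G.dist u v`)
between `u` and `v`. -/
def Monitors {V : Type*} (G : SimpleGraph V) (u v : V) (e : Sym2 V) : Prop :=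
  G.Reachable u v ∧ ∀ p : G.Walk u v, p.length = G.dist u v → e ∈ p.edges

/-- A monitoring edge-geodetic set of `G`: every edge of `G` is monitored by some
pair of vertices of `M`. -/
def IsMEGSet {V : Type*} (G : SimpleGraph V) (M : Set V) : Prop :=
  ∀ e ∈ G.edgeSet, ∃ u ∈ M, ∃ v ∈ M, Monitors G u v e

/-- The monitoring edge-geodetic number of `G`: the minimum size of an MEG-set. -/
noncomputable def meg {V : Type*} [Fintype V] (G : SimpleGraph V) : ℕ :=
  sInf {n : ℕ | ∃ M : Finset V, IsMEGSet G ↑M ∧ M.card = n}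

/-- `M` is an MEG-set of `G` if and only if for every assignment `f` of
a shortest path to each pair of distinct vertices of `M` (that are connected in `G`),
every edge of `G` lies on one of the assigned paths. -/
theorem meg_iff_forall_strong_assignment {V : Type*} [Fintype V]
    (G : SimpleGraph V) (M : Set V) :
    IsMEGSet G M ↔
      ∀ f : ((u : V) → (v : V) → u ∈ M → v ∈ M → u ≠ v → G.Reachable u v → G.Walk u v),
        (∀ u v hu hv hne hr, (f u v hu hv hne hr).length = G.dist u v) →
        ∀ e ∈ G.edgeSet, ∃ u v hu hv hne hr, e ∈ (f u v hu hv hne hr).edges := by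
  constructor
  · intro hM f hf e he
    obtain ⟨u, hu, v, hv, hr, hmon⟩ := hM e he
    have hne : u ≠ v := by
      rintro rfl
      have := hmon Walk.nil (by simp [SimpleGraph.dist_self])
      simp at this
    exact ⟨u, v, hu, hv, hne, hr, hmon _ (hf u v hu hv hne hr)⟩
  · intro H e he
    by_contra hcon
    push_neg at hcon
    have key : ∀ (u v : V), u ∈ M → v ∈ M → u ≠ v → G.Reachable u v →
        ∃ p : G.Walk u v, p.length = G.dist u v ∧ e ∉ p.edges := by
      intro u v hu hv hne hr
      have := hcon u hu v hv
      rw [Monitors] at this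
      push_neg at this
      exact this hr
    choose f hf1 hf2 using key
    obtain ⟨u, v, hu, hv, hne, hr, hmem⟩ := H f hf1 e he
    exact hf2 u v hu hv hne hr hmem
end

section
/- For any finite simple graph G having at least one edge, dem(G) < meg(G). -/
open SimpleGraph

/-- A distance edge-monitoring set: for every edge `e` there are `x ∈ S` and a vertex `y`
such that `e` lies on every shortest path between `x` and `y`. -/
def IsDEMSet {V : Type*} (G : SimpleGraph V) (S : Set V) : Prop :=
  ∀ e ∈ G.edgeSet, ∃ x ∈ S, ∃ y : V, Monitors G x y e

/-- The distance edge-monitoring number of `G`. -/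
noncomputable def dem {V : Type*} [Fintype V] (G : SimpleGraph V) : ℕ :=
  sInf {n : ℕ | ∃ S : Finset V, IsDEMSet G ↑S ∧ S.card = n}


lemma Monitors.symm' {V : Type*} {G : SimpleGraph V} {u v : V} {e : Sym2 V}
    (h : Monitors G u v e) : Monitors G v u e := by
  obtain ⟨hr, hp⟩ := h
  refine ⟨hr.symm, fun p hl => ?_⟩
  have := hp p.reverse (by simp [hl, dist_comm])
  simpa using this

lemma Monitors.ne {V : Type*} {G : SimpleGraph V} {u : V} {e : Sym2 V}
    (h : Monitors G u u e) : False := by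
  have := h.2 Walk.nil (by simp [SimpleGraph.dist_self])
  simpa using this

lemma univ_meg {V : Type*} (G : SimpleGraph V) {e : Sym2 V} (he : e ∈ G.edgeSet) :
    ∃ u v, Monitors G u v e := by
  induction e with
  | h u v =>
    refine ⟨u, v, he.reachable, fun p hl => ?_⟩
    have hd : G.dist u v = 1 := by
      rw [SimpleGraph.dist_eq_one_iff_adj]; exact he
    rw [hd] at hl
    cases p with
    | nil => simp at hl
    | cons h' q =>
      cases q with
      | nil => simp
      | cons h'' q => simp at hl

/-- for any finite graph with at least one edge, `dem G < meg G`. -/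
theorem dem_lt_meg {V : Type*} [Fintype V] (G : SimpleGraph V)
    (h : G.edgeSet.Nonempty) : dem G < meg G := by
  classical
  have hset : {n : ℕ | ∃ M : Finset V, IsMEGSet G ↑M ∧ M.card = n}.Nonempty := by
    refine ⟨_, Finset.univ, fun e he => ?_, rfl⟩
    obtain ⟨u, v, hm⟩ := univ_meg G he
    exact ⟨u, by simp, v, by simp, hm⟩
  obtain ⟨M, hM, hMc⟩ := Nat.sInf_mem hset
  obtain ⟨e0, he0⟩ := h
  obtain ⟨w, hw, -⟩ := hM e0 he0
  have hS : IsDEMSet G ↑(M.erase w) := by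
    intro e he
    obtain ⟨u, hu, v, hv, hm⟩ := hM e he
    have huv : u ≠ v := fun h => (h ▸ hm).ne
    by_cases huw : u = w
    · subst huw
      exact ⟨v, by simp [Finset.mem_erase, huv.symm, hv], u, hm.symm'⟩
    · exact ⟨u, by simp [Finset.mem_erase, huw, hu], v, hm⟩
  have h1 : dem G ≤ (M.erase w).card := Nat.sInf_le ⟨M.erase w, hS, rfl⟩
  have h2 : (M.erase w).card < M.card := Finset.card_erase_lt_of_mem hw
  have h3 : M.card = meg G := hMc
  omega
end

section
/- For all integers p, q with 1 ≤ p < q, there exists a finite connected simple graph G such that dem(G) = p and meg(G) = q. -/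
open SimpleGraph

/-!
Take the complete graph on `{0, …, p}` and attach the `q - p` vertices `p + 1, …, q` as
pendant vertices to the hub `0`. Every vertex other than the hub is simplicial, and a
simplicial vertex can never be an inner vertex of a geodesic (its two neighbours on the geodesic
are adjacent), so every pair monitoring an edge at a simplicial vertex contains that vertex.
Hence a monitoring edge-geodetic set contains all `q` non-hub vertices, while a distance
edge-monitoring set meets every clique edge `ij` with `1 ≤ i < j ≤ p` and, if it misses some
clique vertex `k`, contains a vertex outside the clique to monitor the edge `0k`; either way it
has at least `p` elements. Conversely, each edge is monitored by a pair formed by a clique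
vertex and a non-hub vertex: adjacent pairs monitor their edge, and the hub edges lie on the
unique geodesic from a pendant vertex to a non-hub vertex.
-/

namespace SimpleGraph

variable {V : Type*} {G : SimpleGraph V} {u v w x y c : V} {e : Sym2 V}

def IsSimplicial (G : SimpleGraph V) (v : V) : Prop :=
  G.IsClique (G.neighborSet v)

lemma IsSimplicial.notMem_support_of_length_eq_dist (hv : G.IsSimplicial v) {p : G.Walk x y}
    (hp : p.length = G.dist x y) (hvx : v ≠ x) (hvy : v ≠ y) : v ∉ p.support := by
  intro hvp
  obtain ⟨q, r, rfl⟩ := Walk.mem_support_iff_exists_append.mp hvp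
  cases r with
  | nil => exact hvy rfl
  | @cons _ b _ hvb r =>
  generalize hq : q.reverse = q' at *
  cases q' with
  | nil => exact hvx rfl
  | @cons _ a _ hva q' =>
  -- shortcut `a - v - b` by the edge `ab`, or drop it if `a = b`
  have hlen : q.length = q'.length + 1 := by rw [← Walk.length_reverse, hq, Walk.length_cons]
  have hshort : G.dist x y < (q.append (.cons hvb r)).length := by
    by_cases hab : a = b
    · subst hab
      have := G.dist_le (q'.reverse.append r)
      simp only [Walk.length_append, Walk.length_reverse, Walk.length_cons] at this ⊢
      omega
    · have := G.dist_le (q'.reverse.append (.cons (hv hva hvb hab) r))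
      simp only [Walk.length_append, Walk.length_reverse, Walk.length_cons] at this ⊢
      omega
  omega

lemma Monitors.eq_or_eq_of_isSimplicial (hm : Monitors G x y e) (hv : G.IsSimplicial v)
    (hve : v ∈ e) : v = x ∨ v = y := by
  by_contra! hvxy
  obtain ⟨p, hp⟩ := hm.1.exists_walk_length_eq_dist
  exact hv.notMem_support_of_length_eq_dist hp hvxy.1 hvxy.2
    (Walk.mem_support_of_mem_edges (hm.2 p hp) hve)

lemma Monitors.eq_of_adj (hm : Monitors G x y e) (h : G.Adj x y) : e = s(x, y) := by
  simpa using hm.2 h.toWalk (by simp [dist_eq_one_iff_adj.mpr h])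

lemma monitors_of_adj (h : G.Adj x y) : Monitors G x y s(x, y) := by
  refine ⟨h.reachable, fun p hp => ?_⟩
  rw [dist_eq_one_iff_adj.mpr h] at hp
  cases p with
  | nil => simp at hp
  | cons h' p =>
    cases p with
    | nil => simp
    | cons => simp at hp

lemma monitors_of_forall_commonNeighbor_eq (huw : u ≠ w) (hnadj : ¬ G.Adj u w)
    (huc : G.Adj u c) (hcw : G.Adj c w) (hc : ∀ x, G.Adj u x → G.Adj x w → x = c) :
    Monitors G u w s(u, c) ∧ Monitors G u w s(c, w) := by
  have hreach : G.Reachable u w := huc.reachable.trans hcw.reachable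
  have hdist : G.dist u w = 2 := by
    have hle := G.dist_le (.cons huc (.cons hcw .nil))
    have h0 := hreach.dist_eq_zero_iff.not.mpr huw
    have h1 := dist_eq_one_iff_adj.not.mpr hnadj
    simp only [Walk.length_cons, Walk.length_nil] at hle
    omega
  have hgeod : ∀ p : G.Walk u w, p.length = G.dist u w → p.edges = [s(u, c), s(c, w)] := by
    intro p hp
    rw [hdist] at hp
    match p, hp with
    | .cons hux (.cons hxw .nil), _ => obtain rfl := hc _ hux hxw; simp
  refine ⟨⟨hreach, fun p hp => ?_⟩, ⟨hreach, fun p hp => ?_⟩⟩ <;> simp [hgeod p hp]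

lemma IsMEGSet.mem_of_isSimplicial {M : Set V} (hM : IsMEGSet G M) (hv : G.IsSimplicial v)
    (hvw : G.Adj v w) : v ∈ M := by
  obtain ⟨x, hx, y, hy, hm⟩ := hM s(v, w) hvw
  rcases hm.eq_or_eq_of_isSimplicial hv (Sym2.mem_mk_left v w) with rfl | rfl
  exacts [hx, hy]

lemma IsDEMSet.mem_of_adj_of_notMem {S : Set V} (hS : IsDEMSet G S) (hv : G.IsSimplicial v)
    (hw : G.IsSimplicial w) (hvw : G.Adj v w) (hwS : w ∉ S) : v ∈ S := by
  obtain ⟨x, hx, y, hm⟩ := hS s(v, w) hvw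
  rcases hm.eq_or_eq_of_isSimplicial hv (Sym2.mem_mk_left v w) with rfl | rfl
  · exact hx
  rcases hm.eq_or_eq_of_isSimplicial hw (Sym2.mem_mk_right v w) with rfl | rfl
  · exact absurd hx hwS
  · exact absurd rfl hvw.ne

variable [Fintype V]

lemma meg_eq_card {M : Finset V} (hM : IsMEGSet G M)
    (hmin : ∀ M' : Finset V, IsMEGSet G M' → M.card ≤ M'.card) : meg G = M.card :=
  le_antisymm (Nat.sInf_le ⟨M, hM, rfl⟩)
    (le_csInf ⟨_, M, hM, rfl⟩ (by rintro _ ⟨M', hM', rfl⟩; exact hmin M' hM'))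

lemma dem_eq_card {S : Finset V} (hS : IsDEMSet G S)
    (hmin : ∀ S' : Finset V, IsDEMSet G S' → S.card ≤ S'.card) : dem G = S.card :=
  le_antisymm (Nat.sInf_le ⟨S, hS, rfl⟩)
    (le_csInf ⟨_, S, hS, rfl⟩ (by rintro _ ⟨S', hS', rfl⟩; exact hmin S' hS'))

end SimpleGraph

def cliqueWithPendants (p q : ℕ) : SimpleGraph (Fin (q + 1)) where
  Adj i j := i ≠ j ∧ (i = 0 ∨ j = 0 ∨ (i : ℕ) ≤ p ∧ (j : ℕ) ≤ p)
  symm := ⟨fun _ _ ⟨hne, h⟩ => ⟨hne.symm, by tauto⟩⟩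
  loopless := ⟨fun _ ⟨hne, _⟩ => hne rfl⟩

namespace cliqueWithPendants

variable {p q : ℕ} {u v l : Fin (q + 1)} {e : Sym2 (Fin (q + 1))}

lemma adj_iff : (cliqueWithPendants p q).Adj u v ↔
    u ≠ v ∧ (u = 0 ∨ v = 0 ∨ (u : ℕ) ≤ p ∧ (v : ℕ) ≤ p) :=
  Iff.rfl

lemma adj_zero (hv : v ≠ 0) : (cliqueWithPendants p q).Adj 0 v :=
  adj_iff.mpr ⟨hv.symm, Or.inl rfl⟩

lemma connected : (cliqueWithPendants p q).Connected := by
  have hzero : ∀ v, (cliqueWithPendants p q).Reachable 0 v := fun v => by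
    by_cases hv : v = 0
    · rw [hv]
    · exact (adj_zero hv).reachable
  exact (connected_iff_exists_forall_reachable _).mpr ⟨0, hzero⟩

lemma val_le_of_adj (hv : v ≠ 0) (h : (cliqueWithPendants p q).Adj v u) : (u : ℕ) ≤ p := by
  obtain ⟨-, h⟩ := adj_iff.mp h
  simp only [ne_eq, Fin.ext_iff, Fin.val_zero] at *
  omega

lemma isSimplicial (hv : v ≠ 0) : (cliqueWithPendants p q).IsSimplicial v :=
  fun _ ha _ hb hab =>
    adj_iff.mpr ⟨hab, Or.inr (Or.inr ⟨val_le_of_adj hv ha, val_le_of_adj hv hb⟩)⟩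

lemma monitors_of_pendant (hu : u ≠ 0) (hl : p < (l : ℕ)) (hul : u ≠ l) :
    Monitors (cliqueWithPendants p q) u l s(0, u) ∧
      Monitors (cliqueWithPendants p q) u l s(0, l) := by
  have hl0 : l ≠ 0 := by rintro rfl; simp at hl
  have hunique : ∀ x, (cliqueWithPendants p q).Adj x l → x = 0 := fun x hx => by
    by_contra hx0
    exact (val_le_of_adj hx0 hx).not_gt hl
  rw [Sym2.eq_swap]
  exact monitors_of_forall_commonNeighbor_eq hul (fun h => absurd (hunique u h) hu)
    (adj_zero hu).symm (adj_zero hl0) fun x _ hx => hunique x hx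

lemma exists_monitors_zero (hp : 1 ≤ p) (hpq : p < q) (hv : v ≠ 0) :
    ∃ x : Fin (q + 1), x ≠ 0 ∧ (x : ℕ) ≤ p ∧
      ∃ y ≠ 0, Monitors (cliqueWithPendants p q) x y s(0, v) := by
  by_cases hvp : (v : ℕ) ≤ p
  · refine ⟨v, hv, hvp, ⟨p + 1, by omega⟩, ?_, (monitors_of_pendant hv ?_ ?_).1⟩ <;>
      grind [Fin.ext_iff]
  · refine ⟨⟨1, by omega⟩, ?_, hp, v, hv, (monitors_of_pendant ?_ (by omega) ?_).2⟩ <;>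
      grind [Fin.ext_iff]

lemma exists_monitors (hp : 1 ≤ p) (hpq : p < q) (he : e ∈ (cliqueWithPendants p q).edgeSet) :
    ∃ x : Fin (q + 1), x ≠ 0 ∧ (x : ℕ) ≤ p ∧
      ∃ y ≠ 0, Monitors (cliqueWithPendants p q) x y e := by
  induction e using Sym2.ind with
  | _ a b =>
  rw [mem_edgeSet] at he
  rcases eq_or_ne a 0 with rfl | ha
  · exact exists_monitors_zero hp hpq he.ne.symm
  rcases eq_or_ne b 0 with rfl | hb
  · rw [Sym2.eq_swap]
    exact exists_monitors_zero hp hpq ha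
  exact ⟨a, ha, val_le_of_adj hb he.symm, b, hb, monitors_of_adj he⟩

lemma card_le_of_isMEGSet {M : Finset (Fin (q + 1))}
    (hM : IsMEGSet (cliqueWithPendants p q) M) : q ≤ M.card := by
  have hsub : Finset.univ.erase 0 ⊆ M := fun v hv =>
    have hv0 := Finset.ne_of_mem_erase hv
    hM.mem_of_isSimplicial (isSimplicial hv0) (adj_zero hv0).symm
  simpa using Finset.card_le_card hsub

def cliqueVertices (p q : ℕ) : Finset (Fin (q + 1)) :=
  {v | v ≠ 0 ∧ (v : ℕ) ≤ p}

lemma mem_cliqueVertices : v ∈ cliqueVertices p q ↔ v ≠ 0 ∧ (v : ℕ) ≤ p := by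
  simp [cliqueVertices]

lemma card_cliqueVertices (hpq : p ≤ q) : (cliqueVertices p q).card = p := by
  rw [cliqueVertices, Fin.card_filter_univ_succ']
  simp [Fin.card_filter_val_lt, hpq]

lemma adj_of_mem_cliqueVertices (hu : u ∈ cliqueVertices p q) (hv : v ∈ cliqueVertices p q)
    (huv : u ≠ v) : (cliqueWithPendants p q).Adj u v :=
  adj_iff.mpr
    ⟨huv, Or.inr (Or.inr ⟨(mem_cliqueVertices.mp hu).2, (mem_cliqueVertices.mp hv).2⟩)⟩

lemma card_le_of_isDEMSet (hpq : p ≤ q) {S : Finset (Fin (q + 1))}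
    (hS : IsDEMSet (cliqueWithPendants p q) S) : p ≤ S.card := by
  set C := cliqueVertices p q
  by_cases hCS : C ⊆ S
  · exact card_cliqueVertices hpq ▸ Finset.card_le_card hCS
  obtain ⟨k, hkC, hkS⟩ := Finset.not_subset.mp hCS
  have hk0 := (mem_cliqueVertices.mp hkC).1
  have hsub : C.erase k ⊆ S := fun i hi =>
    hS.mem_of_adj_of_notMem (isSimplicial (mem_cliqueVertices.mp (Finset.mem_of_mem_erase hi)).1)
      (isSimplicial hk0)
      (adj_of_mem_cliqueVertices (Finset.mem_of_mem_erase hi) hkC (Finset.ne_of_mem_erase hi)) hkS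
  -- the edge `0k` is monitored from `S`, but not from a clique vertex other than `k`
  obtain ⟨x, hxS, hxC⟩ : ∃ x ∈ S, x ∉ C := by
    obtain ⟨x, hxS, y, hm⟩ := hS s(0, k) (adj_zero hk0)
    refine ⟨x, hxS, fun hxC => ?_⟩
    have hxk : x ≠ k := by rintro rfl; exact hkS hxS
    obtain rfl : k = y := (hm.eq_or_eq_of_isSimplicial (isSimplicial hk0)
      (Sym2.mem_mk_right 0 k)).resolve_left hxk.symm
    have h0x := hm.eq_of_adj (adj_of_mem_cliqueVertices hxC hkC hxk)
    rcases Sym2.eq_iff.mp h0x with ⟨h0x, -⟩ | ⟨h0k, -⟩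
    exacts [(mem_cliqueVertices.mp hxC).1 h0x.symm, hk0 h0k.symm]
  calc p = (C.erase k).card + 1 := by rw [Finset.card_erase_add_one hkC, card_cliqueVertices hpq]
    _ = (insert x (C.erase k)).card :=
        (Finset.card_insert_of_notMem fun h => hxC (Finset.mem_of_mem_erase h)).symm
    _ ≤ S.card := Finset.card_le_card (Finset.insert_subset hxS hsub)

lemma dem_eq (hp : 1 ≤ p) (hpq : p < q) : dem (cliqueWithPendants p q) = p := by
  have hS : IsDEMSet (cliqueWithPendants p q) (cliqueVertices p q) := fun e he => by
    obtain ⟨x, hx0, hxp, y, -, hm⟩ := exists_monitors hp hpq he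
    exact ⟨x, mem_cliqueVertices.mpr ⟨hx0, hxp⟩, y, hm⟩
  have hcard := card_cliqueVertices hpq.le
  rw [dem_eq_card hS fun S hS' => hcard.trans_le (card_le_of_isDEMSet hpq.le hS'), hcard]

lemma meg_eq (hp : 1 ≤ p) (hpq : p < q) : meg (cliqueWithPendants p q) = q := by
  have hM : IsMEGSet (cliqueWithPendants p q) ↑(Finset.univ.erase (0 : Fin (q + 1))) :=
    fun e he => by
      obtain ⟨x, hx0, -, y, hy0, hm⟩ := exists_monitors hp hpq he
      exact ⟨x, by simpa using hx0, y, by simpa using hy0, hm⟩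
  have hcard : (Finset.univ.erase (0 : Fin (q + 1))).card = q := by simp
  rw [meg_eq_card hM fun M hM' => hcard.trans_le (card_le_of_isMEGSet hM'), hcard]

end cliqueWithPendants

/-- for all `1 ≤ p < q` there is a finite connected graph `G` with
`dem G = p` and `meg G = q`. -/
theorem exists_graph_with_prescribed_dem_meg (p q : ℕ) (hp : 1 ≤ p) (hpq : p < q) :
    ∃ (n : ℕ) (G : SimpleGraph (Fin n)), G.Connected ∧ dem G = p ∧ meg G = q :=
  ⟨q + 1, cliqueWithPendants p q, cliqueWithPendants.connected,
    cliqueWithPendants.dem_eq hp hpq, cliqueWithPendants.meg_eq hp hpq⟩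
end

section
/- Let G be a finite simple graph on n vertices. Then meg(G) = n if and only if for every vertex v of G there exists a neighbor u of v such that every induced 2-path uvx (i.e., every vertex x adjacent to v with x ≠ u and x not adjacent to u) is part of a 4-cycle, meaning there exists a vertex w ≠ v adjacent to both u and x. -/
open SimpleGraph

/-- Adjacent vertices monitor the edge between them. -/
lemma monitors_adj {V : Type*} {G : SimpleGraph V} {a b : V} (h : G.Adj a b) :
    Monitors G a b s(a, b) := by
  refine ⟨h.reachable, fun p hp => ?_⟩
  rw [SimpleGraph.dist_eq_one_iff_adj.mpr h] at hp
  cases p with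
  | nil => simp at hp
  | cons h' q =>
    cases q with
    | nil => simp
    | cons h'' r => simp [SimpleGraph.Walk.length_cons] at hp

/-- The whole vertex set is an MEG-set. -/
lemma isMEGSet_univ {V : Type*} [Fintype V] (G : SimpleGraph V) :
    IsMEGSet G ↑(Finset.univ : Finset V) := by
  intro e he
  induction e with
  | h a b =>
    rw [SimpleGraph.mem_edgeSet] at he
    exact ⟨a, by simp, b, by simp, monitors_adj he⟩

/-- Key lemma for the forward direction: if `a`, `x` form an induced 2-path `a-v-x`
whose only "middle" is `v`, then `(a, x)` monitors the edge `s(a,v)`. -/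
lemma monitors_of_unique_mid {V : Type*} {G : SimpleGraph V} {a v x : V}
    (hab : G.Adj a v) (hvx : G.Adj v x) (hxa : x ≠ a) (hnax : ¬ G.Adj a x)
    (hw : ∀ w, w ≠ v → G.Adj a w → G.Adj x w → False) :
    Monitors G a x s(a, v) := by
  have hr : G.Reachable a x := hab.reachable.trans hvx.reachable
  have hd : G.dist a x = 2 := by
    have h2 : G.dist a x ≤ 2 := by
      have := SimpleGraph.dist_le (SimpleGraph.Walk.cons hab (SimpleGraph.Walk.cons hvx SimpleGraph.Walk.nil))
      simpa using this
    have h0 : 0 < G.dist a x := hr.pos_dist_of_ne (fun e => hxa e.symm)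
    have h1 : G.dist a x ≠ 1 := fun e => hnax (SimpleGraph.dist_eq_one_iff_adj.mp e)
    omega
  refine ⟨hr, fun p hp => ?_⟩
  rw [hd] at hp
  cases p with
  | nil => simp at hp
  | @cons _ w _ h1 p1 =>
    cases p1 with
    | nil => simp at hp
    | @cons _ y _ h2 p2 =>
      cases p2 with
      | nil =>
        have hwv : w = v := by
          by_contra hne
          exact hw w hne h1 h2.symm
        subst hwv
        simp
      | cons h3 p3 => simp [SimpleGraph.Walk.length_cons] at hp

/-- Key lemma for the backward direction: under the 4-cycle condition at `v` (with
neighbour `u`), any geodesic path avoiding `v` as an endpoint can be rerouted to a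
walk of the same length avoiding the edge `s(u,v)`. -/
lemma exists_walk_avoiding {V : Type*} {G : SimpleGraph V} {u v : V} (huv : G.Adj u v)
    (H : ∀ x, G.Adj v x → x ≠ u → ¬ G.Adj u x → ∃ w, w ≠ v ∧ G.Adj u w ∧ G.Adj x w)
    {a b : V} (p : G.Walk a b) :
    p.IsPath → p.length = G.dist a b → v ≠ a → v ≠ b →
      ∃ q : G.Walk a b, q.length = p.length ∧ s(u, v) ∉ q.edges := by
  induction p with
  | nil => exact fun _ _ _ _ => ⟨.nil, rfl, by simp⟩
  | @cons a c b h p' ih =>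
    intro hpath hlen hva hvb
    have hreach : G.Reachable c b := p'.reachable
    have hlen' : p'.length = G.dist c b := by
      have h1 : G.dist c b ≤ p'.length := SimpleGraph.dist_le p'
      obtain ⟨p₀, _, hp₀⟩ := hreach.exists_path_of_dist
      have h2 : G.dist a b ≤ (SimpleGraph.Walk.cons h p₀).length := SimpleGraph.dist_le _
      rw [SimpleGraph.Walk.length_cons, hp₀] at h2
      rw [SimpleGraph.Walk.length_cons] at hlen
      omega
    by_cases hvc : v = c
    · subst hvc
      cases p' with
      | nil => exact absurd rfl hvb
      | @cons _ x _ h2 p'' =>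
        rw [SimpleGraph.Walk.cons_isPath_iff, SimpleGraph.Walk.cons_isPath_iff] at hpath
        obtain ⟨⟨hp'', hvsup⟩, hasup⟩ := hpath
        simp only [SimpleGraph.Walk.support_cons, List.mem_cons] at hasup
        push_neg at hasup
        obtain ⟨hav, hap''⟩ := hasup
        have hxs : x ∈ p''.support := p''.start_mem_support
        have hax : a ≠ x := fun e => hap'' (e ▸ hxs)
        have hvx' : v ≠ x := fun e => hvsup (e ▸ hxs)
        have hlen2 : G.dist a b = p''.length + 2 := by
          simp only [SimpleGraph.Walk.length_cons] at hlen
          omega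
        by_cases hua : u = a
        · subst hua
          by_cases hadj : G.Adj u x
          · exfalso
            have hd := SimpleGraph.dist_le (SimpleGraph.Walk.cons hadj p'')
            rw [SimpleGraph.Walk.length_cons] at hd
            omega
          · obtain ⟨w, hwv, huw, hxw⟩ := H x h2 hax.symm hadj
            refine ⟨SimpleGraph.Walk.cons huw (SimpleGraph.Walk.cons hxw.symm p''), by
              simp [SimpleGraph.Walk.length_cons], ?_⟩
            intro hmem
            have hm := SimpleGraph.Walk.snd_mem_support_of_mem_edges _ hmem
            simp only [SimpleGraph.Walk.support_cons, List.mem_cons] at hm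
            rcases hm with e1 | e2 | e3
            · exact huv.ne e1.symm
            · exact hwv e2.symm
            · exact hvsup e3
        · by_cases hux : u = x
          · subst hux
            by_cases hadj : G.Adj u a
            · exfalso
              have hd := SimpleGraph.dist_le (SimpleGraph.Walk.cons hadj.symm p'')
              rw [SimpleGraph.Walk.length_cons] at hd
              omega
            · obtain ⟨w, hwv, huw, haw⟩ := H a h.symm (fun e => hua e.symm) hadj
              refine ⟨SimpleGraph.Walk.cons haw (SimpleGraph.Walk.cons huw.symm p''), by
                simp [SimpleGraph.Walk.length_cons], ?_⟩
              intro hmem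
              have hm := SimpleGraph.Walk.snd_mem_support_of_mem_edges _ hmem
              simp only [SimpleGraph.Walk.support_cons, List.mem_cons] at hm
              rcases hm with e1 | e2 | e3
              · exact hva e1
              · exact hwv e2.symm
              · exact hvsup e3
          · refine ⟨SimpleGraph.Walk.cons h (SimpleGraph.Walk.cons h2 p''), rfl, ?_⟩
            simp only [SimpleGraph.Walk.edges_cons, List.mem_cons]
            push_neg
            refine ⟨?_, ?_, ?_⟩
            · intro e
              rw [Sym2.eq_iff] at e
              rcases e with ⟨e1, _⟩ | ⟨e1, _⟩
              · exact hua e1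
              · exact huv.ne e1
            · intro e
              rw [Sym2.eq_iff] at e
              rcases e with ⟨e1, _⟩ | ⟨e1, _⟩
              · exact huv.ne e1
              · exact hux e1
            · intro e
              exact hvsup (SimpleGraph.Walk.snd_mem_support_of_mem_edges _ e)
    · obtain ⟨q', hq1, hq2⟩ := ih hpath.of_cons hlen' hvc hvb
      refine ⟨SimpleGraph.Walk.cons h q', by simp [hq1], ?_⟩
      simp only [SimpleGraph.Walk.edges_cons, List.mem_cons]
      push_neg
      refine ⟨?_, hq2⟩
      intro e
      rw [Sym2.eq_iff] at e
      rcases e with ⟨_, e2⟩ | ⟨_, e2⟩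
      · exact hvc e2
      · exact hva e2

/-- `meg G = |V(G)|` iff every vertex `v` has a neighbor `u` such that every
induced 2-path `u-v-x` is part of a 4-cycle. -/
theorem meg_eq_card_iff {V : Type*} [Fintype V] (G : SimpleGraph V) :
    meg G = Fintype.card V ↔
      ∀ v : V, ∃ u : V, G.Adj u v ∧
        ∀ x : V, G.Adj v x → x ≠ u → ¬ G.Adj u x →
          ∃ w : V, w ≠ v ∧ G.Adj u w ∧ G.Adj x w := by
  classical
  constructor
  · -- forward direction: meg = n → condition, by contrapositive
    intro hmeg
    by_contra hcon
    push_neg at hcon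
    obtain ⟨v, hv⟩ := hcon
    -- V \ {v} is an MEG-set
    have hM : IsMEGSet G ↑(Finset.univ.erase v) := by
      intro e he
      induction e with
      | h a b =>
        rw [SimpleGraph.mem_edgeSet] at he
        by_cases hbv : b = v
        · subst hbv
          obtain ⟨x, hvx, hxa, hnax, hw⟩ := hv a he
          refine ⟨a, by simp [he.ne], x, by simp [hvx.ne'], ?_⟩
          exact monitors_of_unique_mid he hvx hxa hnax
            (fun w hwv haw hxw => (hw w hwv haw) hxw)
        · by_cases hav : a = v
          · subst hav
            obtain ⟨x, hvx, hxb, hnbx, hw⟩ := hv b he.symm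
            refine ⟨b, by simp [he.ne'], x, by simp [hvx.ne'], ?_⟩
            have := monitors_of_unique_mid he.symm hvx hxb hnbx
              (fun w hwv hbw hxw => (hw w hwv hbw) hxw)
            rwa [Sym2.eq_swap] at this
          · exact ⟨a, by simp [hav], b, by simp [hbv], monitors_adj he⟩
    have hle : meg G ≤ Fintype.card V - 1 := by
      apply Nat.sInf_le
      refine ⟨Finset.univ.erase v, hM, ?_⟩
      rw [Finset.card_erase_of_mem (Finset.mem_univ v), Finset.card_univ]
    have hpos : 0 < Fintype.card V := Fintype.card_pos_iff.mpr ⟨v⟩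
    omega
  · -- backward direction
    intro hcond
    have key : ∀ M : Finset V, IsMEGSet G ↑M → M = Finset.univ := by
      intro M hM
      rw [Finset.eq_univ_iff_forall]
      intro v
      obtain ⟨u, huv, H⟩ := hcond v
      obtain ⟨a, haM, b, hbM, hmon⟩ := hM s(u, v) (G.mem_edgeSet.mpr huv)
      by_cases hva : v = a
      · exact hva ▸ haM
      by_cases hvb : v = b
      · exact hvb ▸ hbM
      exfalso
      obtain ⟨p, hpath, hplen⟩ := hmon.1.exists_path_of_dist
      obtain ⟨q, hq1, hq2⟩ := exists_walk_avoiding huv H p hpath hplen hva hvb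
      exact hq2 (hmon.2 q (by rw [hq1, hplen]))
    have hS : {n : ℕ | ∃ M : Finset V, IsMEGSet G ↑M ∧ M.card = n} = {Fintype.card V} := by
      ext n
      simp only [Set.mem_setOf_eq, Set.mem_singleton_iff]
      constructor
      · rintro ⟨M, hM, rfl⟩
        rw [key M hM, Finset.card_univ]
      · rintro rfl
        exact ⟨Finset.univ, isMEGSet_univ G, Finset.card_univ⟩
    rw [meg, hS, csInf_singleton]
end

section
/- Let G be a finite connected simple graph on n vertices with girth at least 5 (every cycle of G has length at least 5), and suppose G is not isomorphic to K_1 or K_2. Then meg(G) ≤ n - 1. -/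
open SimpleGraph

section Aux

variable {V : Type*} {G : SimpleGraph V}

lemma aux_no_tri (hg : 5 ≤ G.egirth) {a b c : V} (hab : G.Adj a b) (hbc : G.Adj b c)
    (hca : G.Adj c a) : False := by
  have h1 : a ≠ b := hab.ne
  have h2 : b ≠ c := hbc.ne
  have h3 : c ≠ a := hca.ne
  have hw : (Walk.cons hab (Walk.cons hbc (Walk.cons hca Walk.nil))).IsCycle := by
    rw [SimpleGraph.Walk.isCycle_def]
    refine ⟨?_, by simp, ?_⟩
    · simp only [SimpleGraph.Walk.isTrail_def, SimpleGraph.Walk.edges_cons,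
        SimpleGraph.Walk.edges_nil, List.nodup_cons, List.mem_cons, List.not_mem_nil,
        List.nodup_nil, Sym2.eq_iff]
      constructor
      · tauto
      constructor
      · tauto
      simp
    · simp only [SimpleGraph.Walk.support_cons, SimpleGraph.Walk.support_nil, List.tail_cons]
      simp [h1.symm, h2, h3, h3.symm]
  have := SimpleGraph.le_egirth.mp hg a _ hw
  simp only [SimpleGraph.Walk.length_cons, SimpleGraph.Walk.length_nil] at this
  norm_num at this

lemma aux_no_sq (hg : 5 ≤ G.egirth) {a b c d : V} (hab : G.Adj a b) (hbc : G.Adj b c)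
    (hcd : G.Adj c d) (hda : G.Adj d a) (hac : a ≠ c) (hbd : b ≠ d) : False := by
  have h1 : a ≠ b := hab.ne
  have h2 : b ≠ c := hbc.ne
  have h3 : c ≠ d := hcd.ne
  have h4 : d ≠ a := hda.ne
  have hw : (Walk.cons hab (Walk.cons hbc (Walk.cons hcd (Walk.cons hda Walk.nil)))).IsCycle := by
    rw [SimpleGraph.Walk.isCycle_def]
    refine ⟨?_, by simp, ?_⟩
    · simp only [SimpleGraph.Walk.isTrail_def, SimpleGraph.Walk.edges_cons,
        SimpleGraph.Walk.edges_nil, List.nodup_cons, List.mem_cons, List.not_mem_nil,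
        List.nodup_nil, Sym2.eq_iff]
      refine ⟨by tauto, by tauto, by tauto, by simp⟩
    · simp only [SimpleGraph.Walk.support_cons, SimpleGraph.Walk.support_nil, List.tail_cons]
      simp [h1.symm, h2, h3, h4, hbd, hac.symm, h4.symm]
  have := SimpleGraph.le_egirth.mp hg a _ hw
  simp only [SimpleGraph.Walk.length_cons, SimpleGraph.Walk.length_nil] at this
  norm_num at this

lemma aux_monitors_adj {a b : V} (hab : G.Adj a b) : Monitors G a b s(a, b) := by
  refine ⟨hab.reachable, fun p hp => ?_⟩
  rw [SimpleGraph.dist_eq_one_iff_adj.mpr hab] at hp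
  cases p with
  | nil => simp at hp
  | cons h q =>
    cases q with
    | nil => simp
    | cons h' q' => simp only [SimpleGraph.Walk.length_cons] at hp; omega

lemma aux_monitors_two (hg : 5 ≤ G.egirth) {u w x : V} (huw : G.Adj u w) (hwx : G.Adj w x)
    (hux : u ≠ x) : Monitors G u x s(w, x) := by
  have hreach : G.Reachable u x := huw.reachable.trans hwx.reachable
  have hnadj : ¬ G.Adj u x := fun h => aux_no_tri hg huw hwx h.symm
  have hd2 : G.dist u x = 2 := by
    have hle : G.dist u x ≤ 2 := by
      have := SimpleGraph.dist_le (Walk.cons huw (Walk.cons hwx Walk.nil))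
      simpa using this
    have h0 : G.dist u x ≠ 0 := (hreach.pos_dist_of_ne hux).ne'
    have h1 : G.dist u x ≠ 1 := fun h => hnadj (SimpleGraph.dist_eq_one_iff_adj.mp h)
    omega
  refine ⟨hreach, fun p hp => ?_⟩
  rw [hd2] at hp
  cases p with
  | nil => simp at hp
  | @cons _ m _ hum q =>
    cases q with
    | nil => simp at hp
    | @cons _ m2 _ hmx q' =>
      cases q' with
      | nil =>
        by_cases hmw : m = w
        · subst hmw; simp
        · exact absurd (aux_no_sq hg hum hmx hwx.symm huw.symm hux hmw) not_false
      | cons h'' q'' => simp only [SimpleGraph.Walk.length_cons] at hp; omega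

lemma aux_exists_two_nbrs [Fintype V] (hconn : G.Connected)
    (hK1 : ¬ Nonempty (G ≃g (⊤ : SimpleGraph (Fin 1))))
    (hK2 : ¬ Nonempty (G ≃g (⊤ : SimpleGraph (Fin 2)))) :
    ∃ w x y : V, G.Adj w x ∧ G.Adj w y ∧ x ≠ y := by
  have hne : Nonempty V := hconn.nonempty
  have key : ∀ {s t : V}, s ≠ t →
      (∃ w x y : V, G.Adj w x ∧ G.Adj w y ∧ x ≠ y) ∨ G.Adj s t := by
    intro s t hst
    classical
    obtain ⟨q⟩ := hconn.preconnected s t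
    have hp := q.bypass_isPath
    set p := q.bypass with hpdef
    clear_value p
    cases p with
    | nil => exact absurd rfl hst
    | @cons _ m1 _ h1 q1 =>
      cases q1 with
      | nil => exact Or.inr h1
      | @cons _ m2 _ h2 q2 =>
        left
        refine ⟨m1, s, m2, h1.symm, h2, ?_⟩
        intro hsm2
        have := hp.support_nodup
        simp only [SimpleGraph.Walk.support_cons, List.nodup_cons, List.mem_cons] at this
        exact this.1 (Or.inr (by rw [hsm2]; exact SimpleGraph.Walk.start_mem_support _))
  rcases lt_or_ge 2 (Fintype.card V) with h3 | h2
  · obtain ⟨a, b, c, hab, hac, hbc⟩ := Fintype.two_lt_card_iff.mp h3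
    rcases key hbc with done | hbcadj
    · exact done
    rcases key hab with done | habadj
    · exact done
    exact ⟨b, a, c, habadj.symm, hbcadj, hac⟩
  · exfalso
    interval_cases h : Fintype.card V
    · exact absurd h Fintype.card_ne_zero
    · apply hK1
      have e : V ≃ Fin 1 := Fintype.equivFinOfCardEq h
      have hsub : Subsingleton V := Fintype.card_le_one_iff_subsingleton.mp (by omega)
      refine ⟨⟨e, ?_⟩⟩
      intro x y
      simp [Subsingleton.elim x y, G.irrefl]
    · apply hK2
      have e : V ≃ Fin 2 := Fintype.equivFinOfCardEq h
      have hfin2 : ∀ x y z : Fin 2, x ≠ z → y ≠ z → x = y := by decide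
      have hadjall : ∀ a b : V, a ≠ b → G.Adj a b := by
        intro a b hab
        rcases key hab with ⟨w', x', y', hwx', hwy', hxy'⟩ | hadj
        · -- three distinct-ish vertices in a 2-element type: contradiction
          exfalso
          have hx' : x' ≠ y' := hxy'
          have h1 : e x' ≠ e w' := fun h => hwx'.ne' (e.injective h)
          have h2 : e y' ≠ e w' := fun h => hwy'.ne' (e.injective h)
          exact hx' (e.injective (hfin2 _ _ _ h1 h2))
        · exact hadj
      refine ⟨⟨e, ?_⟩⟩
      intro x y
      simp only [top_adj, ne_eq]
      constructor
      · intro h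
        exact hadjall x y fun hxy => h (by rw [hxy])
      · intro h hxy
        exact h.ne (e.injective hxy)

end Aux

/-- a finite connected graph of girth at least 5 that is not a `K₁` or a `K₂`
satisfies `meg G ≤ n - 1`. -/
theorem meg_le_of_girth_ge_five {V : Type*} [Fintype V] (G : SimpleGraph V)
    (hconn : G.Connected) (hgirth : 5 ≤ G.egirth)
    (hK1 : ¬ Nonempty (G ≃g (⊤ : SimpleGraph (Fin 1))))
    (hK2 : ¬ Nonempty (G ≃g (⊤ : SimpleGraph (Fin 2)))) :
    meg G ≤ Fintype.card V - 1 := by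
  classical
  obtain ⟨w, x0, y0, hwx0, hwy0, hxy0⟩ := aux_exists_two_nbrs hconn hK1 hK2
  have hM : IsMEGSet G ↑(Finset.univ.erase w) := by
    intro e he
    induction e using Sym2.ind with
    | _ a b =>
      rw [SimpleGraph.mem_edgeSet] at he
      by_cases haw : a = w
      · subst haw
        obtain ⟨u, hu, hub⟩ : ∃ u, G.Adj a u ∧ u ≠ b := by
          by_cases hx : x0 = b
          · exact ⟨y0, hwy0, hx ▸ hxy0.symm⟩
          · exact ⟨x0, hwx0, hx⟩
        refine ⟨u, ?_, b, ?_, aux_monitors_two hgirth hu.symm he hub⟩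
        · simp [hu.ne']
        · simp [he.ne']
      · by_cases hbw : b = w
        · subst hbw
          obtain ⟨u, hu, hua⟩ : ∃ u, G.Adj b u ∧ u ≠ a := by
            by_cases hx : x0 = a
            · exact ⟨y0, hwy0, hx ▸ hxy0.symm⟩
            · exact ⟨x0, hwx0, hx⟩
          have hmon := aux_monitors_two hgirth hu.symm he.symm hua
          refine ⟨u, by simp [hu.ne'], a, by simp [he.ne], ?_⟩
          rwa [Sym2.eq_swap]
        · exact ⟨a, by simp [haw], b, by simp [hbw], aux_monitors_adj he⟩
  have hcard : (Finset.univ.erase w).card = Fintype.card V - 1 := by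
    rw [Finset.card_erase_of_mem (Finset.mem_univ w), Finset.card_univ]
  exact Nat.sInf_le ⟨Finset.univ.erase w, hM, hcard⟩
end

section
/- Let G be a finite connected simple graph with at least 3 vertices (in particular G is not isomorphic to K_2), and let v be a vertex of G having a pendant neighbor, i.e., a neighbor of degree 1. Then v belongs to no minimum MEG-set of G. -/
open SimpleGraph

/-! Let `u` be the pendant neighbor of `v`. The edge `uv` can only be monitored by a pair
containing `u`, so `u` lies in every MEG-set `M`. Every walk leaving `u` starts with `uv`, so
whenever a pair `{v, w}` monitors an edge `e`, the pair `{u, w}` monitors `e` too; and since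
`G` has an edge other than `uv`, the set `M` contains some third vertex `x`, which makes
`{u, x}` monitor `uv`. Hence `M \ {v}` is still an MEG-set, and `v` cannot lie in a minimum
one. -/

section Monitors

variable {V : Type*} {G : SimpleGraph V} {a b : V} {e : Sym2 V}

lemma not_monitors_self (a : V) (e : Sym2 V) : ¬ Monitors G a a e := by
  rintro ⟨-, h⟩
  simpa using h .nil (by simp)

lemma Monitors.symm (h : Monitors G a b e) : Monitors G b a e := by
  refine ⟨h.1.symm, fun p hp => ?_⟩
  simpa using h.2 p.reverse (by rw [Walk.length_reverse, hp, dist_comm])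

lemma Monitors.eq_of_adj (h : Monitors G a b e) (hab : G.Adj a b) : e = s(a, b) := by
  simpa using h.2 (.cons hab .nil) (by simp [dist_eq_one_iff_adj.mpr hab])

end Monitors

section Pendant

variable {V : Type*} {G : SimpleGraph V} {u v w : V} {e : Sym2 V}

lemma adj_iff_eq_of_degree_eq_one [Fintype (G.neighborSet u)] (hdeg : G.degree u = 1)
    (huv : G.Adj u v) (x : V) : G.Adj u x ↔ x = v := by
  obtain ⟨y, -, hy⟩ := degree_eq_one_iff_existsUnique_adj.mp hdeg
  exact ⟨fun hx => (hy x hx).trans (hy v huv).symm, fun hx => hx ▸ huv⟩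

lemma SimpleGraph.Walk.eq_cons_of_pendant (hu : ∀ x, G.Adj u x ↔ x = v) (p : G.Walk u w) (hw : w ≠ u) :
    ∃ q : G.Walk v w, p = .cons ((hu v).2 rfl) q := by
  cases p with
  | nil => exact absurd rfl hw
  | cons h q =>
    obtain rfl := (hu _).1 h
    exact ⟨q, rfl⟩

lemma dist_pendant_eq (hu : ∀ x, G.Adj u x ↔ x = v) (hw : w ≠ u) (hr : G.Reachable v w) :
    G.dist u w = G.dist v w + 1 := by
  have huv := (hu v).2 rfl
  obtain ⟨q, hq⟩ := hr.exists_walk_length_eq_dist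
  obtain ⟨p, hp⟩ := ((Adj.reachable huv).trans hr).exists_walk_length_eq_dist
  obtain ⟨q', rfl⟩ := p.eq_cons_of_pendant hu hw
  have hle : G.dist u w ≤ G.dist v w + 1 := by simpa [hq] using G.dist_le (.cons huv q)
  have hge : G.dist v w ≤ q'.length := G.dist_le q'
  simp only [Walk.length_cons] at hp
  omega

lemma Monitors.of_pendant (hu : ∀ x, G.Adj u x ↔ x = v) (hw : w ≠ u)
    (h : Monitors G v w e) : Monitors G u w e := by
  refine ⟨(Adj.reachable ((hu v).2 rfl)).trans h.1, fun p hp => ?_⟩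
  obtain ⟨q, rfl⟩ := p.eq_cons_of_pendant hu hw
  rw [dist_pendant_eq hu hw h.1, Walk.length_cons] at hp
  exact List.mem_cons_of_mem _ (h.2 q (by omega))

lemma monitors_pendant_edge (hu : ∀ x, G.Adj u x ↔ x = v) (hw : w ≠ u)
    (hr : G.Reachable u w) : Monitors G u w s(u, v) := by
  refine ⟨hr, fun p _ => ?_⟩
  obtain ⟨q, rfl⟩ := p.eq_cons_of_pendant hu hw
  exact List.mem_cons_self

variable {M : Set V}

lemma IsMEGSet.pendant_mem (hu : ∀ x, G.Adj u x ↔ x = v) (hM : IsMEGSet G M) : u ∈ M := by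
  classical
  obtain ⟨a, ha, b, hb, hr, hmon⟩ := hM s(u, v) ((hu v).2 rfl)
  by_contra huM
  have hau : a ≠ u := by rintro rfl; exact huM ha
  have hbu : b ≠ u := by rintro rfl; exact huM hb
  obtain ⟨p, hpath, hlen⟩ := hr.exists_path_of_dist
  have hup : u ∈ p.support := p.fst_mem_support_of_mem_edges (hmon p hlen)
  -- The path enters `u` and leaves it again, both times along `uv`.
  obtain ⟨q₁, hq₁⟩ := (p.takeUntil u hup).reverse.eq_cons_of_pendant hu hau
  obtain ⟨q₂, hq₂⟩ := (p.dropUntil u hup).eq_cons_of_pendant hu hbu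
  have h₁ : s(u, v) ∈ (p.takeUntil u hup).edges := by
    have : s(u, v) ∈ (p.takeUntil u hup).reverse.edges := by simp [hq₁]
    simpa using this
  have h₂ : s(u, v) ∈ (p.dropUntil u hup).edges := by simp [hq₂]
  have hnodup := hpath.isTrail.edges_nodup
  rw [← p.take_spec hup, Walk.edges_append] at hnodup
  exact List.disjoint_of_nodup_append hnodup h₁ h₂

lemma exists_edge_ne [Fintype V] (hG : G.Preconnected) (hn : 3 ≤ Fintype.card V) (u v : V) :
    ∃ e ∈ G.edgeSet, e ≠ s(u, v) := by
  classical
  obtain ⟨w, hw⟩ : ∃ w, w ∉ ({u, v} : Finset V) := by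
    by_contra! h
    have := Finset.card_le_card (fun x _ => h x : Finset.univ ⊆ {u, v})
    have := Finset.card_le_two (a := u) (b := v)
    simp only [Finset.card_univ] at *
    omega
  have : Nontrivial V := Fintype.one_lt_card_iff_nontrivial.mp (by omega)
  obtain ⟨x, hwx⟩ := hG.exists_adj_of_nontrivial w
  refine ⟨s(w, x), hwx, fun h => hw ?_⟩
  have := Sym2.mem_mk_left w x
  rw [h, Sym2.mem_iff] at this
  simpa using this

lemma IsMEGSet.exists_mem_ne_ne [Fintype V] (hM : IsMEGSet G M) (hG : G.Preconnected)
    (hn : 3 ≤ Fintype.card V) (huv : G.Adj u v) : ∃ x ∈ M, x ≠ u ∧ x ≠ v := by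
  by_contra! hMuv
  obtain ⟨e, he, hne⟩ := exists_edge_ne hG hn u v
  obtain ⟨a, ha, b, hb, hmon⟩ := hM e he
  have hM' : ∀ y ∈ M, y = u ∨ y = v := fun y hy => (em (y = u)).imp_right (hMuv y hy)
  rcases hM' a ha with rfl | rfl <;> rcases hM' b hb with rfl | rfl
  · exact not_monitors_self _ _ hmon
  · exact hne (hmon.eq_of_adj huv)
  · exact hne (hmon.symm.eq_of_adj huv)
  · exact not_monitors_self _ _ hmon

lemma Monitors.exists_pendant_monitors (hG : G.Preconnected) (hu : ∀ x, G.Adj u x ↔ x = v)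
    {x : V} (hx : x ∈ M) (hxu : x ≠ u) (hxv : x ≠ v)
    {b : V} (hb : b ∈ M) (hbv : b ≠ v) (h : Monitors G v b e) :
    ∃ d ∈ M \ {v}, Monitors G u d e := by
  by_cases hbu : b = u
  · subst hbu
    rw [h.eq_of_adj ((hu v).2 rfl).symm, Sym2.eq_swap]
    exact ⟨x, ⟨hx, hxv⟩, monitors_pendant_edge hu hxu (hG b x)⟩
  · exact ⟨b, ⟨hb, hbv⟩, h.of_pendant hu hbu⟩

lemma IsMEGSet.diff_pendant_neighbor (hG : G.Preconnected) (hu : ∀ x, G.Adj u x ↔ x = v)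
    (hM : IsMEGSet G M) {x : V} (hx : x ∈ M) (hxu : x ≠ u) (hxv : x ≠ v) :
    IsMEGSet G (M \ {v}) := by
  have hu' : u ∈ M \ {v} := ⟨hM.pendant_mem hu, ((hu v).2 rfl).ne⟩
  intro e he
  obtain ⟨a, ha, b, hb, hmon⟩ := hM e he
  by_cases hav : a = v
  · subst hav
    have hbv : b ≠ a := fun hba => not_monitors_self a e (hba ▸ hmon)
    obtain ⟨d, hd, hmon'⟩ := hmon.exists_pendant_monitors hG hu hx hxu hxv hb hbv
    exact ⟨u, hu', d, hd, hmon'⟩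
  by_cases hbv : b = v
  · subst hbv
    obtain ⟨d, hd, hmon'⟩ := hmon.symm.exists_pendant_monitors hG hu hx hxu hxv ha hav
    exact ⟨u, hu', d, hd, hmon'⟩
  exact ⟨a, ⟨ha, hav⟩, b, ⟨hb, hbv⟩, hmon⟩

end Pendant

lemma meg_le_card {V : Type*} [Fintype V] {G : SimpleGraph V} {M : Finset V}
    (hM : IsMEGSet G ↑M) : meg G ≤ M.card :=
  Nat.sInf_le ⟨M, hM, rfl⟩

/-- in a finite connected graph on at least 3 vertices, a vertex having a
pendant neighbor belongs to no minimum MEG-set. -/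
theorem not_mem_minimum_megSet_of_pendant_neighbor {V : Type*} [Fintype V]
    (G : SimpleGraph V) [DecidableRel G.Adj] (hG : G.Connected)
    (hn : 3 ≤ Fintype.card V) (v u : V) (hadj : G.Adj v u) (hdeg : G.degree u = 1) :
    ∀ M : Finset V, IsMEGSet G ↑M → M.card = meg G → v ∉ M := by
  classical
  intro M hM hcard hvM
  have hu := adj_iff_eq_of_degree_eq_one hdeg hadj.symm
  obtain ⟨x, hx, hxu, hxv⟩ := hM.exists_mem_ne_ne hG.preconnected hn hadj.symm
  have hM' : IsMEGSet G ↑(M.erase v) := by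
    rw [Finset.coe_erase]
    exact hM.diff_pendant_neighbor hG.preconnected hu hx hxu hxv
  have := meg_le_card hM'
  have := Finset.card_erase_lt_of_mem hvM
  omega
end

section
/- Let G be a finite connected cograph on n ≥ 2 vertices, i.e., a connected graph containing no induced path on 4 vertices. If G has a cut-vertex then meg(G) = n - 1, and otherwise meg(G) = n. -/
open SimpleGraph

/-!
In a connected P₄-free graph any two vertices are at distance at most 2. If an edge at `w` is
monitored by a pair `x, y` avoiding `w`, then `w` is an inner vertex of every `x`–`y` geodesic, so
deleting `w` makes `x` and `y` farther apart than 2; when `w` is not a cut-vertex, `G - w` is again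
connected and P₄-free, which is impossible. Hence every MEG-set contains all non-cut-vertices.
A cut-vertex `z` is the only common neighbour of any `v ≠ z` and a vertex `r` of another component
of `G - z`; so `z` is universal (hence the only cut-vertex) and the pair `v, r` monitors the edge
`vz`, which makes `V ∖ {z}` an MEG-set.
-/

namespace SimpleGraph

variable {V : Type*} {G : SimpleGraph V} {u v w x y z : V}

def P4Free (G : SimpleGraph V) : Prop :=
  ∀ a b c d : V, G.Adj a b → G.Adj b c → G.Adj c d →
    ¬ G.Adj a c → ¬ G.Adj a d → ¬ G.Adj b d → False

def IsCutVertex (G : SimpleGraph V) (v : V) : Prop :=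
  ¬ (G.induce ({v}ᶜ : Set V)).Connected

theorem Walk.exists_eq_cons_cons_nil_of_length_eq_two {p : G.Walk u v} (h : p.length = 2) :
    ∃ (w : V) (huw : G.Adj u w) (hwv : G.Adj w v), p = .cons huw (.cons hwv .nil) := by
  match p, h with
  | .cons huw (.cons hwv .nil), _ => exact ⟨_, huw, hwv, rfl⟩

theorem Walk.two_le_length_of_mem_support {p : G.Walk u v} (hw : w ∈ p.support) (hu : w ≠ u)
    (hv : w ≠ v) : 2 ≤ p.length := by
  match p with
  | .nil => simp_all
  | .cons _ .nil => simp_all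
  | .cons _ (.cons _ q) => simp

theorem Monitors.mem_edgeSet {e : Sym2 V} (h : Monitors G u v e) : e ∈ G.edgeSet := by
  obtain ⟨p, hp⟩ := h.1.exists_walk_length_eq_dist
  exact p.edges_subset_edgeSet (h.2 p hp)

theorem Adj.monitors (h : G.Adj u v) : Monitors G u v s(u, v) := by
  refine ⟨h.reachable, fun p hp => ?_⟩
  rw [dist_eq_one_iff_adj.mpr h] at hp
  obtain rfl : p = h.toWalk := Walk.eq_of_length_le_one hp.le (by simp)
  simp

theorem monitors_of_dist_eq_two (hd : G.dist u v = 2)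
    (hw : ∀ m, G.Adj u m → G.Adj m v → m = w) :
    Monitors G u v s(u, w) := by
  refine ⟨.of_dist_ne_zero (by omega), fun p hp => ?_⟩
  obtain ⟨m, hum, hmv, rfl⟩ := p.exists_eq_cons_cons_nil_of_length_eq_two (hp.trans hd)
  obtain rfl := hw m hum hmv
  simp

theorem Monitors.dist_lt_dist_induce_compl (h : Monitors G x y s(w, u)) (hx : x ≠ w)
    (hy : y ≠ w) (hr : (G.induce {w}ᶜ).Reachable ⟨x, hx⟩ ⟨y, hy⟩) :
    G.dist x y < (G.induce {w}ᶜ).dist ⟨x, hx⟩ ⟨y, hy⟩ := by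
  by_contra! hle
  obtain ⟨q, hq⟩ := hr.exists_walk_length_eq_dist
  set p := q.map (Embedding.induce _).toHom
  have hp : p.length = G.dist x y :=
    le_antisymm (by rw [Walk.length_map, hq]; exact hle) (G.dist_le p)
  have hwp := p.fst_mem_support_of_mem_edges (h.2 p hp)
  rw [Walk.support_map, List.mem_map] at hwp
  obtain ⟨a, -, ha⟩ := hwp
  exact a.2 ha

theorem connected_induce_of_forall_adj {s : Set V} (hw : w ∈ s)
    (h : ∀ v ∈ s, v ≠ w → G.Adj w v) :
    (G.induce s).Connected := by
  refine (connected_iff_exists_forall_reachable _).2 ⟨⟨w, hw⟩, fun v => ?_⟩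
  by_cases hv : (v : V) = w
  · exact (Subtype.ext hv : v = ⟨w, hw⟩) ▸ Reachable.refl _
  · exact Adj.reachable (h v v.2 hv)

namespace P4Free

theorem induce (hG : G.P4Free) (s : Set V) : (G.induce s).P4Free :=
  fun a b c d => hG a b c d

theorem dist_le_two (hG : G.P4Free) (x y : V) : G.dist x y ≤ 2 := by
  by_cases hr : G.Reachable x y
  swap
  · simp [dist_eq_zero_of_not_reachable hr]
  obtain ⟨p, hp⟩ := hr.exists_walk_length_eq_dist
  have shortest : ∀ q : G.Walk x y, p.length ≤ q.length := fun q => hp ▸ G.dist_le q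
  rw [← hp]
  match p, shortest with
  | .nil, _ | .cons _ .nil, _ | .cons _ (.cons _ .nil), _ => simp
  -- the first four vertices of a geodesic of length ≥ 3 induce a P₄
  | .cons hab (.cons hbc (.cons hcd q)), shortest =>
    refine (hG _ _ _ _ hab hbc hcd (fun hac => ?_) (fun had => ?_) (fun hbd => ?_)).elim
    · simpa using shortest (.cons hac (.cons hcd q))
    · simpa using shortest (.cons had q)
    · simpa using shortest (.cons hab (.cons hbd q))

theorem dist_eq_two (hG : G.P4Free) (hr : G.Reachable x y) (hne : x ≠ y) (hnadj : ¬ G.Adj x y) :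
    G.dist x y = 2 := by
  have h0 : G.dist x y ≠ 0 := fun h => hne (hr.dist_eq_zero_iff.1 h)
  have h1 : G.dist x y ≠ 1 := fun h => hnadj (dist_eq_one_iff_adj.1 h)
  have := hG.dist_le_two x y
  omega

end P4Free

namespace IsCutVertex

theorem exists_dist_eq_two (hconn : G.Connected) (hG : G.P4Free) (hz : G.IsCutVertex z)
    (hv : v ≠ z) :
    ∃ r, r ≠ z ∧ G.dist v r = 2 ∧ ∀ m, G.Adj v m → G.Adj m r → m = z := by
  obtain ⟨r, hr⟩ : ∃ r : ({z}ᶜ : Set V), ¬ (G.induce {z}ᶜ).Reachable ⟨v, hv⟩ r := by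
    by_contra! h
    exact hz ((connected_iff_exists_forall_reachable _).2 ⟨_, h⟩)
  have hvr : v ≠ r := fun h =>
    hr ((Subtype.ext h : (⟨v, hv⟩ : ({z}ᶜ : Set V)) = r) ▸ Reachable.refl _)
  have hnadj : ¬ G.Adj v r := fun h => hr (Adj.reachable (G := G.induce {z}ᶜ) h)
  refine ⟨r, r.2, hG.dist_eq_two (hconn v r) hvr hnadj, fun m hvm hmr => ?_⟩
  by_contra hmz
  exact hr ((Adj.reachable (G := G.induce {z}ᶜ) (u := ⟨v, hv⟩) (v := ⟨m, hmz⟩) hvm).trans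
    (Adj.reachable hmr))

theorem exists_monitors (hconn : G.Connected) (hG : G.P4Free) (hz : G.IsCutVertex z)
    (hv : v ≠ z) :
    ∃ r, r ≠ z ∧ Monitors G v r s(v, z) :=
  let ⟨r, hrz, hd, hmid⟩ := exists_dist_eq_two hconn hG hz hv
  ⟨r, hrz, monitors_of_dist_eq_two hd hmid⟩

theorem adj (hconn : G.Connected) (hG : G.P4Free) (hz : G.IsCutVertex z) (hv : v ≠ z) :
    G.Adj z v :=
  let ⟨_, _, hmon⟩ := exists_monitors hconn hG hz hv
  (hmon.mem_edgeSet : G.Adj v z).symm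

theorem eq (hconn : G.Connected) (hG : G.P4Free) (hz : G.IsCutVertex z)
    (hw : G.IsCutVertex w) : w = z := by
  by_contra hwz
  exact hw (connected_induce_of_forall_adj (Ne.symm hwz) fun v hv hvz => adj hconn hG hz hvz)

end IsCutVertex

theorem IsMEGSet.mem_of_not_isCutVertex (hconn : G.Connected) (hG : G.P4Free) {M : Set V}
    (hM : IsMEGSet G M) (hw : ¬ G.IsCutVertex w) : w ∈ M := by
  rw [IsCutVertex, not_not] at hw
  have : Nontrivial V := let ⟨⟨y, hy⟩⟩ := hw.nonempty; nontrivial_of_ne y w hy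
  obtain ⟨u, hwu⟩ := hconn.preconnected.exists_adj_of_nontrivial w
  obtain ⟨x, hx, y, hy, hmon⟩ := hM s(w, u) hwu
  by_contra hwM
  have hxw : x ≠ w := fun h => hwM (h ▸ hx)
  have hyw : y ≠ w := fun h => hwM (h ▸ hy)
  obtain ⟨p, hp⟩ := hmon.1.exists_walk_length_eq_dist
  have h2 : 2 ≤ G.dist x y :=
    hp ▸ p.two_le_length_of_mem_support (p.fst_mem_support_of_mem_edges (hmon.2 p hp))
      hxw.symm hyw.symm
  have := hmon.dist_lt_dist_induce_compl hxw hyw (hw.preconnected _ _)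
  have := (hG.induce {w}ᶜ).dist_le_two ⟨x, hxw⟩ ⟨y, hyw⟩
  omega

theorem meg_eq_of_forall_le_card [Fintype V] {k : ℕ} (M₀ : Finset V) (h₀ : IsMEGSet G M₀)
    (hk : M₀.card = k) (hmin : ∀ M : Finset V, IsMEGSet G M → k ≤ M.card) : meg G = k :=
  IsLeast.csInf_eq ⟨⟨M₀, h₀, hk⟩, by rintro _ ⟨M, hM, rfl⟩; exact hmin M hM⟩

theorem isMEGSet_univ : IsMEGSet G Set.univ := by
  rintro ⟨u, v⟩ huv
  exact ⟨u, trivial, v, trivial, huv.monitors⟩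

theorem IsCutVertex.isMEGSet_compl (hconn : G.Connected) (hG : G.P4Free) (hz : G.IsCutVertex z) :
    IsMEGSet G {z}ᶜ := by
  refine Sym2.ind fun u v (huv : G.Adj u v) => ?_
  by_cases hu : u = z
  · subst u
    obtain ⟨r, hrz, hmon⟩ := hz.exists_monitors hconn hG huv.ne'
    rw [Sym2.eq_swap]
    exact ⟨v, huv.ne', r, hrz, hmon⟩
  by_cases hv : v = z
  · subst v
    obtain ⟨r, hrz, hmon⟩ := hz.exists_monitors hconn hG hu
    exact ⟨u, hu, r, hrz, hmon⟩
  exact ⟨u, hu, v, hv, huv.monitors⟩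

theorem IsCutVertex.meg_eq [Fintype V] (hconn : G.Connected) (hG : G.P4Free)
    (hz : G.IsCutVertex z) : meg G = Fintype.card V - 1 := by
  classical
  refine meg_eq_of_forall_le_card {z}ᶜ (by simpa using hz.isMEGSet_compl hconn hG)
    (by simp [Finset.card_compl]) fun M hM => ?_
  have hMc : Mᶜ ⊆ {z} := fun w hw => Finset.mem_singleton.2 <| hz.eq hconn hG <|
    by_contra fun hw' => Finset.mem_compl.1 hw (hM.mem_of_not_isCutVertex hconn hG hw')
  have := Finset.card_le_card hMc
  rw [Finset.card_compl, Finset.card_singleton] at this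
  omega

theorem meg_eq_card_of_forall_not_isCutVertex [Fintype V] (hconn : G.Connected) (hG : G.P4Free)
    (h : ∀ v, ¬ G.IsCutVertex v) : meg G = Fintype.card V := by
  classical
  refine meg_eq_of_forall_le_card Finset.univ (by simpa using isMEGSet_univ) Finset.card_univ
    fun M hM => ?_
  rw [Finset.eq_univ_of_forall fun w => hM.mem_of_not_isCutVertex hconn hG (h w), Finset.card_univ]

end SimpleGraph

theorem meg_of_cograph_general {V : Type*} [Fintype V] (G : SimpleGraph V)
    (hconn : G.Connected)
    (hP4 : ∀ a b c d : V, G.Adj a b → G.Adj b c → G.Adj c d →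
      ¬ G.Adj a c → ¬ G.Adj a d → ¬ G.Adj b d → False) :
    ((∃ v : V, ¬ (G.induce ({v}ᶜ : Set V)).Connected) →
        meg G = Fintype.card V - 1) ∧
    ((¬ ∃ v : V, ¬ (G.induce ({v}ᶜ : Set V)).Connected) →
        meg G = Fintype.card V) :=
  ⟨fun ⟨_, hz⟩ => IsCutVertex.meg_eq hconn hP4 hz,
    fun h => meg_eq_card_of_forall_not_isCutVertex hconn hP4 (not_exists.1 h)⟩

/-- a connected cograph (no induced `P₄`) on `n ≥ 2` vertices satisfies
`meg G = n - 1` if it has a cut-vertex, and `meg G = n` otherwise. -/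
theorem meg_of_cograph {V : Type*} [Fintype V] (G : SimpleGraph V)
    (hconn : G.Connected) (hn : 2 ≤ Fintype.card V)
    (hP4 : ∀ a b c d : V, G.Adj a b → G.Adj b c → G.Adj c d →
      ¬ G.Adj a c → ¬ G.Adj a d → ¬ G.Adj b d → False) :
    ((∃ v : V, ¬ (G.induce ({v}ᶜ : Set V)).Connected) →
        meg G = Fintype.card V - 1) ∧
    ((¬ ∃ v : V, ¬ (G.induce ({v}ᶜ : Set V)).Connected) →
        meg G = Fintype.card V) :=
  meg_of_cograph_general G hconn hP4
end

section
/- Let G be a finite 2-connected simple graph on n vertices (G has at least 3 vertices and the deletion of any single vertex leaves a connected graph) whose girth g is finite and satisfies g ≥ 4. Then meg(G) ≤ 4n/(g - 3). -/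
open SimpleGraph

/-!
Put `R = ⌊(g - 3) / 4⌋`, so that `4R + 3 ≤ g`. Paths of total length below `g` with the same
endpoints coincide, so balls of radius about `2R` look like trees; together with minimum degree
two (a consequence of 2-connectivity) this lets every vertex close to a root `r` step one unit
farther from `r`. Hence each residue class of `dist r ·` modulo `R + 1` is `R`-dominating, and
the smallest one has at most `n / (R + 1)` vertices.

Every `R`-dominating set `M` is an MEG-set. For an edge `uv`, let `m ∈ M` be closest to it, at
distance `c` from `v` and `c + 1` from `u`. Walking from `u` away from `m` reaches a vertex `z`
at distance `R + 1` from `m`, and some `x ∈ M` lies within `R` of `z`. The tree-like geometry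
forces `x` to be closer to `u` than to `v`, and then the unique short path from `x` to `m` is a
geodesic through `uv`.
-/
namespace SimpleGraph

variable {V : Type*} {G : SimpleGraph V}

namespace Walk

theorem IsTrail.length_le_card_of_edges_subset [DecidableEq V] {a b : V} {p : G.Walk a b}
    (hp : p.IsTrail) {s : Finset (Sym2 V)} (hs : ∀ e ∈ p.edges, e ∈ s) : p.length ≤ s.card := by
  rw [← length_edges, ← List.toFinset_card_of_nodup hp.edges_nodup]
  exact Finset.card_le_card fun e he => hs e (List.mem_toFinset.mp he)

theorem IsPath.eq_of_length_add_length_lt_girth {a b : V} {p q : G.Walk a b} (hp : p.IsPath)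
    (hq : q.IsPath) (h : p.length + q.length < G.girth) : p = q := by
  classical
  set s := p.edges.toFinset ∪ q.edges.toFinset
  set H := G ⊓ fromEdgeSet (s : Set (Sym2 V))
  have hHG : H ≤ G := inf_le_left
  have mem_H : ∀ e ∈ G.edgeSet, e ∈ s → e ∈ H.edgeSet := fun e he hs => by
    rw [edgeSet_inf, edgeSet_fromEdgeSet]
    exact ⟨he, hs, G.not_isDiag_of_mem_edgeSet he⟩
  have hpH : ∀ e ∈ p.edges, e ∈ H.edgeSet := fun e he =>
    mem_H e (p.edges_subset_edgeSet he) (by simp [s, he])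
  have hqH : ∀ e ∈ q.edges, e ∈ H.edgeSet := fun e he =>
    mem_H e (q.edges_subset_edgeSet he) (by simp [s, he])
  -- Any cycle of the union `H` of `p` and `q` has at most `p.length + q.length` edges.
  have hH : H.IsAcyclic := by
    intro c C hC
    have hCG : ∀ e ∈ C.edges, e ∈ G.edgeSet := fun e he =>
      edgeSet_mono hHG (C.edges_subset_edgeSet he)
    have hgirth := G.girth_le_length (hC.transfer hCG)
    have hCs : C.length ≤ s.card := hC.isTrail.length_le_card_of_edges_subset fun e he => by
      have := C.edges_subset_edgeSet he
      rw [edgeSet_inf, edgeSet_fromEdgeSet] at this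
      exact this.2.1
    have hs : s.card ≤ p.length + q.length := by
      refine (Finset.card_union_le _ _).trans (Nat.add_le_add ?_ ?_) <;>
        exact (List.toFinset_card_le _).trans (length_edges _).le
    rw [length_transfer] at hgirth
    omega
  have hpq := congrArg Subtype.val <| (hH.subsingleton_path a b).elim
    ⟨p.transfer H hpH, hp.transfer hpH⟩ ⟨q.transfer H hqH, hq.transfer hqH⟩
  have back : ∀ (w : G.Walk a b) (hw : ∀ e ∈ w.edges, e ∈ H.edgeSet),
      (w.transfer H hw).map (Hom.ofLE hHG) = w := fun w hw => by
    rw [← transfer_eq_map_ofLE, transfer_transfer, transfer_self]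
    simpa using w.edges_subset_edgeSet
  rw [← back p hpH, ← back q hqH]
  exact congrArg _ hpq

theorem IsPath.eq_bypass_of_length_add_length_lt_girth [DecidableEq V] {a b : V}
    {p q : G.Walk a b} (hp : p.IsPath) (h : p.length + q.length < G.girth) : p = q.bypass :=
  hp.eq_of_length_add_length_lt_girth q.bypass_isPath
    (by have := q.length_bypass_le_length; omega)

theorem IsPath.support_subset_of_length_add_length_lt_girth {a b : V} {p q : G.Walk a b}
    (hp : p.IsPath) (h : p.length + q.length < G.girth) : p.support ⊆ q.support := by
  classical
  rw [hp.eq_bypass_of_length_add_length_lt_girth h]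
  exact q.support_bypass_subset_support

theorem IsPath.edges_subset_of_length_add_length_lt_girth {a b : V} {p q : G.Walk a b}
    (hp : p.IsPath) (h : p.length + q.length < G.girth) : p.edges ⊆ q.edges := by
  classical
  rw [hp.eq_bypass_of_length_add_length_lt_girth h]
  exact q.edges_bypass_subset_edges

theorem dist_add_dist_le_length [DecidableEq V] {a b y : V} (p : G.Walk a b)
    (hy : y ∈ p.support) : G.dist a y + G.dist y b ≤ p.length := by
  rw [← p.take_spec hy, length_append]
  exact Nat.add_le_add (dist_le _) (dist_le _)

theorem exists_dist_le_of_le_length {a b : V} (p : G.Walk a b) {k : ℕ} (hk : k ≤ p.length) :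
    ∃ z, G.dist a z ≤ k ∧ G.dist z b ≤ p.length - k := by
  induction p generalizing k with
  | @nil c => exact ⟨c, by simp, by simp⟩
  | @cons c _ _ hadj q ih =>
    rcases k with _ | k
    · exact ⟨c, by simp, by simpa using dist_le (cons hadj q)⟩
    · obtain ⟨z, hz, hzb⟩ := ih (k := k) (by rw [length_cons] at hk; omega)
      refine ⟨z, ?_, by simpa using hzb⟩
      have := hadj.reachable.dist_triangle_left z
      rw [dist_eq_one_iff_adj.mpr hadj] at this
      omega

end Walk

variable {u v x : V}

theorem Connected.dist_ne_of_adj (hconn : G.Connected) (huv : G.Adj u v)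
    (h : 2 * G.dist x u + 1 < G.girth) : G.dist x v ≠ G.dist x u := by
  classical
  intro heq
  obtain ⟨γu, hγu, hγu_len⟩ := hconn.exists_path_of_dist x u
  obtain ⟨γv, -, hγv_len⟩ := hconn.exists_path_of_dist x v
  have hv : v ∉ γu.support := fun hv => by
    have := γu.dist_add_dist_le_length hv
    rw [dist_eq_one_iff_adj.mpr huv.symm] at this
    omega
  have hu : u ∈ γv.support :=
    (hγu.concat hv huv).support_subset_of_length_add_length_lt_girth (q := γv)
      (by rw [Walk.length_concat]; omega) (by simp)
  have := γv.dist_add_dist_le_length hu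
  rw [dist_eq_one_iff_adj.mpr huv] at this
  omega

theorem Connected.dist_eq_add_one_or_of_adj (hconn : G.Connected) (huv : G.Adj u v)
    (h : 2 * G.dist x u + 1 < G.girth) :
    G.dist x v = G.dist x u + 1 ∨ G.dist x u = G.dist x v + 1 := by
  have := hconn.dist_ne_of_adj huv h
  rcases huv.diff_dist_adj (u := x) with h' | h' | h' <;> omega
theorem Connected.exists_adj_dist_eq_add_one (hconn : G.Connected) {r z : V}
    (hdeg : ∃ w₁ w₂, G.Adj z w₁ ∧ G.Adj z w₂ ∧ w₁ ≠ w₂) (h : 2 * G.dist r z + 1 < G.girth) :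
    ∃ w, G.Adj z w ∧ G.dist r w = G.dist r z + 1 := by
  classical
  obtain ⟨w₁, w₂, h₁, h₂, hne⟩ := hdeg
  -- Otherwise both `w₁` and `w₂` are closer to `r`, giving two distinct short paths `r → wᵢ → z`.
  by_contra! hfar
  have hcloser : ∀ w, G.Adj z w → G.dist r z = G.dist r w + 1 := fun w hw =>
    (hconn.dist_eq_add_one_or_of_adj hw h).resolve_left (hfar w hw)
  have hd₁ := hcloser w₁ h₁
  have hd₂ := hcloser w₂ h₂
  obtain ⟨γ₁, hγ₁, hγ₁_len⟩ := hconn.exists_path_of_dist r w₁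
  obtain ⟨γ₂, -, hγ₂_len⟩ := hconn.exists_path_of_dist r w₂
  have hz : z ∉ γ₁.support := fun hz => by
    have := γ₁.dist_add_dist_le_length hz
    omega
  have hw₁ : w₁ ∈ (γ₂.concat h₂.symm).support :=
    (hγ₁.concat hz h₁.symm).support_subset_of_length_add_length_lt_girth
      (by simp only [Walk.length_concat]; omega) (by simp)
  rw [Walk.support_concat, List.mem_append, List.mem_singleton] at hw₁
  rcases hw₁ with hw₁ | rfl
  · have := γ₂.dist_add_dist_le_length hw₁
    exact hne ((hconn.dist_eq_zero_iff).mp (by omega))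
  · exact h₁.ne rfl

theorem monitors_of_isPath {a b : V} {p : G.Walk a b} (hp : p.IsPath)
    (h : 2 * p.length < G.girth) {e : Sym2 V} (he : e ∈ p.edges) : Monitors G a b e :=
  ⟨p.reachable, fun q hq =>
    hp.edges_subset_of_length_add_length_lt_girth (by have := dist_le p; omega) he⟩

theorem Connected.monitors_of_dist_eq_add_one (hconn : G.Connected) {m : V} (huv : G.Adj u v)
    (hxv : G.dist x v = G.dist x u + 1) (hmu : G.dist m u = G.dist m v + 1)
    (h : 2 * (G.dist x u + G.dist m v + 1) < G.girth) : Monitors G x m s(u, v) := by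
  classical
  obtain ⟨γ₁, hγ₁, hγ₁_len⟩ := hconn.exists_path_of_dist x u
  obtain ⟨γ₂, hγ₂, hγ₂_len⟩ := hconn.exists_path_of_dist v m
  -- A common vertex `y` would give `d(x,v) + d(m,u) ≤ d(x,u) + d(m,v)`, by triangles through `y`.
  have hdisj : ∀ y ∈ γ₁.support, y ∉ γ₂.support := fun y hy₁ hy₂ => by
    have := γ₁.dist_add_dist_le_length hy₁
    have := γ₂.dist_add_dist_le_length hy₂
    have := hconn.dist_triangle (u := x) (v := y) (w := v)
    have := hconn.dist_triangle (u := m) (v := y) (w := u)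
    have := dist_comm (G := G) (u := y) (v := v)
    have := dist_comm (G := G) (u := y) (v := m)
    have := dist_comm (G := G) (u := v) (v := m)
    omega
  have hW : (γ₁.append (.cons huv γ₂)).IsPath := by
    rw [Walk.isPath_def, Walk.support_append, Walk.support_cons, List.tail_cons]
    exact hγ₁.support_nodup.append hγ₂.support_nodup fun y hy₁ hy₂ => hdisj y hy₁ hy₂
  refine monitors_of_isPath hW ?_ (by simp)
  rw [Walk.length_append, Walk.length_cons, hγ₁_len, hγ₂_len, dist_comm (u := v)]
  omega

theorem Connected.dist_add_dist_le_or_of_adj (hconn : G.Connected) {z : V} (huv : G.Adj u v)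
    (hxu : G.dist x u = G.dist x v + 1) (h : G.dist x u + G.dist x z + G.dist z u < G.girth) :
    G.dist x v + G.dist v z ≤ G.dist x z ∨ G.dist z v + G.dist v u ≤ G.dist z u := by
  classical
  obtain ⟨γ, hγ, hγ_len⟩ := hconn.exists_path_of_dist x v
  obtain ⟨γ₁, -, hγ₁_len⟩ := hconn.exists_path_of_dist x z
  obtain ⟨γ₂, -, hγ₂_len⟩ := hconn.exists_path_of_dist z u
  have hu : u ∉ γ.support := fun hu => by
    have := γ.dist_add_dist_le_length hu
    omega
  have hv : v ∈ (γ₁.append γ₂).support :=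
    (hγ.concat hu huv.symm).support_subset_of_length_add_length_lt_girth
      (by rw [Walk.length_concat, Walk.length_append]; omega) (by simp)
  rcases (Walk.mem_support_append_iff _ _).mp hv with hv | hv
  · exact .inl (hγ₁_len ▸ γ₁.dist_add_dist_le_length hv)
  · exact .inr (hγ₂_len ▸ γ₂.dist_add_dist_le_length hv)

theorem exists_dist_eq_add_of_forall_exists_adj {r : V} {K : ℕ}
    (hext : ∀ z, G.dist r z < K → ∃ w, G.Adj z w ∧ G.dist r w = G.dist r z + 1) (u : V)
    {t : ℕ} (ht : G.dist r u + t ≤ K) : ∃ z, G.dist r z = G.dist r u + t ∧ G.dist u z ≤ t := by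
  induction t with
  | zero => exact ⟨u, rfl, by simp⟩
  | succ t ih =>
    obtain ⟨z, hz, huz⟩ := ih (by omega)
    obtain ⟨w, hzw, hw⟩ := hext z (by omega)
    have := hzw.reachable.dist_triangle_right u
    rw [dist_eq_one_iff_adj.mpr hzw] at this
    exact ⟨w, by omega, by omega⟩

theorem Connected.exists_dist_eq_of_le_dist (hconn : G.Connected) {r v : V} {k : ℕ}
    (hk : k ≤ G.dist r v) : ∃ z, G.dist r z = k ∧ G.dist z v ≤ G.dist r v - k := by
  obtain ⟨p, hp⟩ := hconn.exists_walk_length_eq_dist r v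
  obtain ⟨z, hrz, hzv⟩ := p.exists_dist_le_of_le_length (hp ▸ hk)
  have := hconn.dist_triangle (u := r) (v := z) (w := v)
  exact ⟨z, by omega, by omega⟩

def IsDistDominating (G : SimpleGraph V) (R : ℕ) (M : Finset V) : Prop :=
  ∀ v, ∃ m ∈ M, G.dist m v ≤ R

theorem Connected.exists_isDistDominating_card_mul_le [Fintype V] (hconn : G.Connected) (r : V)
    (R : ℕ) (hext : ∀ z, G.dist r z < R → ∃ w, G.Adj z w ∧ G.dist r w = G.dist r z + 1) :
    ∃ M : Finset V, G.IsDistDominating R M ∧ M.card * (R + 1) ≤ Fintype.card V := by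
  -- `M` is the residue class `j` of `dist r ·` modulo `R + 1` with the fewest vertices.
  obtain ⟨j, hj, hcard⟩ := Finset.exists_card_fiber_le_of_card_le_nsmul (s := Finset.univ)
    (t := Finset.range (R + 1)) (f := fun v => G.dist r v % (R + 1))
    (b := (Fintype.card V : ℚ) / (R + 1)) ⟨0, by simp⟩ (by
      rw [Finset.card_range, nsmul_eq_mul, Finset.card_univ]
      field_simp
      push_cast
      rfl)
  rw [Finset.mem_range] at hj
  refine ⟨Finset.univ.filter fun v => G.dist r v % (R + 1) = j, fun v => ?_, ?_⟩
  · rcases le_or_gt j (G.dist r v) with hjv | hvj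
    · set k := G.dist r v - (G.dist r v - j) % (R + 1)
      obtain ⟨z, hz, hzv⟩ := hconn.exists_dist_eq_of_le_dist (v := v) (k := k) (Nat.sub_le _ _)
      have hk : k = j + (R + 1) * ((G.dist r v - j) / (R + 1)) := by
        have := Nat.div_add_mod (G.dist r v - j) (R + 1)
        omega
      refine ⟨z, ?_, ?_⟩
      · simp only [Finset.mem_filter, Finset.mem_univ, true_and]
        rw [hz, hk, Nat.add_mul_mod_self_left, Nat.mod_eq_of_lt hj]
      · have := Nat.mod_lt (G.dist r v - j) (Nat.add_one_pos R)
        omega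
    · obtain ⟨z, hz, hvz⟩ :=
        exists_dist_eq_add_of_forall_exists_adj hext v (t := j - G.dist r v) (by omega)
      refine ⟨z, ?_, by rw [dist_comm]; omega⟩
      simp only [Finset.mem_filter, Finset.mem_univ, true_and]
      rw [hz, Nat.add_sub_cancel' hvj.le, Nat.mod_eq_of_lt hj]
  · rw [le_div_iff₀ (by positivity)] at hcard
    exact_mod_cast hcard

theorem Connected.exists_monitors_of_isDistDominating (hconn : G.Connected)
    (hdeg : ∀ z, ∃ w₁ w₂, G.Adj z w₁ ∧ G.Adj z w₂ ∧ w₁ ≠ w₂) {R : ℕ} (hR : 4 * R + 3 ≤ G.girth)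
    {M : Finset V} (hM : G.IsDistDominating R M) {m : V} (hm : m ∈ M) (huv : G.Adj u v)
    (hmin : ∀ m' ∈ M, G.dist m v ≤ G.dist m' u ∧ G.dist m v ≤ G.dist m' v) :
    ∃ x ∈ M, Monitors G x m s(u, v) := by
  have huv₁ : G.dist u v = 1 := dist_eq_one_iff_adj.mpr huv
  have hvu₁ : G.dist v u = 1 := dist_eq_one_iff_adj.mpr huv.symm
  obtain ⟨m₀, hm₀, hm₀v⟩ := hM v
  have hc : G.dist m v ≤ R := (hmin m₀ hm₀).2.trans hm₀v
  have hmu : G.dist m u = G.dist m v + 1 :=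
    (hconn.dist_eq_add_one_or_of_adj huv.symm (by omega)).resolve_right
      (by have := (hmin m hm).1; omega)
  obtain ⟨z, hz, huz⟩ := exists_dist_eq_add_of_forall_exists_adj (r := m) (K := R + 1)
    (fun z hz => hconn.exists_adj_dist_eq_add_one (hdeg z) (by omega)) u
    (t := R - G.dist m v) (by omega)
  have hvz : G.dist v z = R - G.dist m v + 1 := by
    have := hconn.dist_triangle (u := m) (v := v) (w := z)
    have := hconn.dist_triangle (u := v) (v := u) (w := z)
    omega
  obtain ⟨x, hx, hxz⟩ := hM z
  have hzu := dist_comm (G := G) (u := z) (v := u)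
  have hzv := dist_comm (G := G) (u := z) (v := v)
  have hxu : G.dist x u ≤ 2 * R - G.dist m v := by
    have := hconn.dist_triangle (u := x) (v := z) (w := u)
    omega
  have hxv : G.dist x v = G.dist x u + 1 := by
    -- Otherwise `v` lies between `x` and `z`, so `x` is closer to `v` than `m` is,
    -- or between `z` and `u`, which is too far from `z`.
    refine (hconn.dist_eq_add_one_or_of_adj huv (by omega)).resolve_right fun hux => ?_
    have := (hmin x hx).2
    rcases hconn.dist_add_dist_le_or_of_adj huv hux (z := z) (by omega) with h | h <;> omega
  exact ⟨x, hx, hconn.monitors_of_dist_eq_add_one huv hxv hmu (by omega)⟩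

theorem Connected.isMEGSet_of_isDistDominating (hconn : G.Connected)
    (hdeg : ∀ z, ∃ w₁ w₂, G.Adj z w₁ ∧ G.Adj z w₂ ∧ w₁ ≠ w₂) {R : ℕ} (hR : 4 * R + 3 ≤ G.girth)
    {M : Finset V} (hM : G.IsDistDominating R M) : IsMEGSet G M := by
  intro e he
  induction e using Sym2.ind with | _ u v => ?_
  have huv : G.Adj u v := he
  obtain ⟨m, hm, hmin⟩ := M.exists_min_image (fun m => min (G.dist m u) (G.dist m v))
    (let ⟨m, hm, _⟩ := hM u; ⟨m, hm⟩)
  wlog hvu : G.dist m v ≤ G.dist m u generalizing u v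
  · rw [Sym2.eq_swap]
    refine this v u (G.mem_edgeSet.mpr huv.symm) huv.symm (fun m' hm' => ?_) (by omega)
    rw [min_comm, min_comm (G.dist m' v)]
    exact hmin m' hm'
  obtain ⟨x, hx, hmon⟩ := hconn.exists_monitors_of_isDistDominating hdeg hR hM hm huv
    fun m' hm' => by
      have := hmin m' hm'
      simp only [le_min_iff, min_le_iff] at this
      omega
  exact ⟨x, hx, m, hm, hmon⟩

theorem exists_adj_ne_of_connected_induce_compl {w z t : V}
    (h : (G.induce ({w}ᶜ : Set V)).Connected) (hz : z ≠ w) (ht : t ≠ w) (hzt : z ≠ t) :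
    ∃ w', G.Adj z w' ∧ w' ≠ w := by
  obtain ⟨p⟩ := h.preconnected ⟨z, hz⟩ ⟨t, ht⟩
  cases p with
  | nil => exact absurd rfl hzt
  | @cons _ b _ hadj _ => exact ⟨b, hadj, b.2⟩

theorem exists_adj_adj_ne_of_connected_induce_compl [Fintype V] (hn : 3 ≤ Fintype.card V)
    (h2conn : ∀ v : V, (G.induce ({v}ᶜ : Set V)).Connected) (z : V) :
    ∃ w₁ w₂, G.Adj z w₁ ∧ G.Adj z w₂ ∧ w₁ ≠ w₂ := by
  classical
  have hthird : ∀ a b : V, ∃ t, t ≠ a ∧ t ≠ b := fun a b => by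
    obtain ⟨t, -, ht⟩ := Finset.exists_mem_notMem_of_card_lt_card (s := {a, b})
      (t := Finset.univ) (Finset.card_le_two.trans_lt (by simp only [Finset.card_univ]; omega))
    simp only [Finset.mem_insert, Finset.mem_singleton, not_or] at ht
    exact ⟨t, ht⟩
  obtain ⟨a, haz, -⟩ := hthird z z
  obtain ⟨t, hta, htz⟩ := hthird a z
  obtain ⟨w₁, h₁, -⟩ := exists_adj_ne_of_connected_induce_compl (h2conn a) haz.symm hta htz.symm
  obtain ⟨t', ht'w, ht'z⟩ := hthird w₁ z
  obtain ⟨w₂, h₂, hw₂⟩ :=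
    exists_adj_ne_of_connected_induce_compl (h2conn w₁) h₁.ne ht'w ht'z.symm
  exact ⟨w₁, w₂, h₁, h₂, hw₂.symm⟩

end SimpleGraph

theorem meg_le_of_two_connected_girth_general {V : Type*} [Fintype V] (G : SimpleGraph V)
    (hn : 3 ≤ Fintype.card V) (hconn : G.Connected)
    (h2conn : ∀ v : V, (G.induce ({v}ᶜ : Set V)).Connected) :
    meg G * (G.girth - 3) ≤ 4 * Fintype.card V := by
  rcases lt_or_ge G.girth 3 with hg | hg
  · simp [Nat.sub_eq_zero_of_le hg.le]
  set R := (G.girth - 3) / 4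
  have hR : 4 * R + 3 ≤ G.girth := by omega
  have hdeg := exists_adj_adj_ne_of_connected_induce_compl hn h2conn
  obtain ⟨r⟩ : Nonempty V := Fintype.card_pos_iff.mp (by omega)
  obtain ⟨M, hM, hcard⟩ := hconn.exists_isDistDominating_card_mul_le r R
    fun z _ => hconn.exists_adj_dist_eq_add_one (hdeg z) (by omega)
  calc meg G * (G.girth - 3)
      ≤ M.card * (4 * (R + 1)) :=
        Nat.mul_le_mul (Nat.sInf_le ⟨M, hconn.isMEGSet_of_isDistDominating hdeg hR hM, rfl⟩)
          (by omega)
    _ = 4 * (M.card * (R + 1)) := by ring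
    _ ≤ 4 * Fintype.card V := Nat.mul_le_mul_left 4 hcard

/-- a 2-connected graph on `n` vertices with finite girth `g ≥ 4`
satisfies `meg G ≤ 4n / (g - 3)` (stated multiplicatively, which is equivalent since
`g - 3 > 0`). -/
theorem meg_le_of_two_connected_girth {V : Type*} [Fintype V] (G : SimpleGraph V)
    (hn : 3 ≤ Fintype.card V) (hconn : G.Connected)
    (h2conn : ∀ v : V, (G.induce ({v}ᶜ : Set V)).Connected)
    (hgfin : G.egirth ≠ ⊤) (hg4 : 4 ≤ G.egirth) :
    meg G * (G.girth - 3) ≤ 4 * Fintype.card V :=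
  meg_le_of_two_connected_girth_general G hn hconn h2conn
end
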